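/- Let S, T be bounded operators on H with S* = −S, Γ∘T*∘Γ = T, and T Hilbert–Schmidt, and let Â be the block operator Â(φ,ψ) = (Sφ + T̄ψ, Tφ + S̄ψ) on H ⊕ H. Then for every t ∈ ℝ: exp(tÂ) ∘ J ∘ exp(tÂ)* = J and exp(tÂ)* ∘ J ∘ exp(tÂ) = J, and the lower-left block (exp(tÂ))₂₁ of exp(tÂ) is a Hilbert–Schmidt operator on H. (In other words, exp(tÂ) belongs to Sp₂ for all t.) -/

import Mathlib

noncomputable section

open ContinuousLinearMap Filter
open scoped Topology

/-- `conj ∘ conj = id` as a `RingHomCompTriple`, so that conjugate-linear maps compose. -/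
instance : RingHomCompTriple (starRingEnd ℂ) (starRingEnd ℂ) (RingHom.id ℂ) :=
  ⟨RingHom.ext fun z => Complex.conj_conj z⟩

variable {H : Type*} [NormedAddCommGroup H] [InnerProductSpace ℂ H] [CompleteSpace H]

/-- For a conjugation `Γ` (a conjugate-linear isometric involution) and a bounded operator `X`,
the operator `X̄ = Γ ∘ X ∘ Γ`. -/
def conjOp (Γ : H →ₛₗᵢ[starRingEnd ℂ] H) (X : H →L[ℂ] H) : H →L[ℂ] H :=
  Γ.toContinuousLinearMap.comp (X.comp Γ.toContinuousLinearMap)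

/-- The Hilbert space direct sum `H ⊕ H`. -/
abbrev H2 (H : Type*) [NormedAddCommGroup H] [InnerProductSpace ℂ H] : Type _ :=
  WithLp 2 (H × H)

/-- The element `(φ, ψ)` of `H ⊕ H`. -/
def mk2 (φ ψ : H) : H2 H := (WithLp.equiv 2 (H × H)).symm (φ, ψ)

/-- The inclusion `f ↦ (f, 0)` of `H` into `H ⊕ H`. -/
def inc1 : H →L[ℂ] H2 H :=
  (WithLp.prodContinuousLinearEquiv 2 ℂ H H).symm.toContinuousLinearMap.comp
    (ContinuousLinearMap.inl ℂ H H)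

/-- The inclusion `f ↦ (0, f)` of `H` into `H ⊕ H`. -/
def inc2 : H →L[ℂ] H2 H :=
  (WithLp.prodContinuousLinearEquiv 2 ℂ H H).symm.toContinuousLinearMap.comp
    (ContinuousLinearMap.inr ℂ H H)

/-- The projection `(φ, ψ) ↦ φ` of `H ⊕ H` onto the first coordinate. -/
def proj1 : H2 H →L[ℂ] H :=
  (ContinuousLinearMap.fst ℂ H H).comp
    (WithLp.prodContinuousLinearEquiv 2 ℂ H H).toContinuousLinearMap

/-- The projection `(φ, ψ) ↦ ψ` of `H ⊕ H` onto the second coordinate. -/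
def proj2 : H2 H →L[ℂ] H :=
  (ContinuousLinearMap.snd ℂ H H).comp
    (WithLp.prodContinuousLinearEquiv 2 ℂ H H).toContinuousLinearMap

/-- The block `B₁₁ f = P₁ B (f, 0)` of an operator `B` on `H ⊕ H`. -/
def blk11 (B : H2 H →L[ℂ] H2 H) : H →L[ℂ] H := proj1.comp (B.comp inc1)

/-- The block `B₂₁ f = P₂ B (f, 0)` of an operator `B` on `H ⊕ H`. -/
def blk21 (B : H2 H →L[ℂ] H2 H) : H →L[ℂ] H := proj2.comp (B.comp inc1)

/-- The block `B₁₂ f = P₁ B (0, f)` of an operator `B` on `H ⊕ H`. -/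
def blk12 (B : H2 H →L[ℂ] H2 H) : H →L[ℂ] H := proj1.comp (B.comp inc2)

/-- The block `B₂₂ f = P₂ B (0, f)` of an operator `B` on `H ⊕ H`. -/
def blk22 (B : H2 H →L[ℂ] H2 H) : H →L[ℂ] H := proj2.comp (B.comp inc2)

/-- `X` is Hilbert–Schmidt with respect to the Hilbert basis `b`. -/
def IsHS {E : Type*} [NormedAddCommGroup E] [InnerProductSpace ℂ E] {ι : Type*}
    (b : HilbertBasis ι ℂ E) (X : E →L[ℂ] E) : Prop :=
  Summable fun i => ‖X (b i)‖ ^ 2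

/-- The Hilbert–Schmidt norm `‖X‖₂ = (∑ᵢ ‖X eᵢ‖²)^{1/2}` with respect to the Hilbert basis `b`. -/
def hsNorm {E : Type*} [NormedAddCommGroup E] [InnerProductSpace ℂ E] {ι : Type*}
    (b : HilbertBasis ι ℂ E) (X : E →L[ℂ] E) : ℝ :=
  Real.sqrt (∑' i, ‖X (b i)‖ ^ 2)

/-!
The operator `Â` is skew with respect to the indefinite form `⟨J ·, ·⟩`, i.e. `Â* J + J Â = 0`;
this is exactly the computation `T̄* = T`, `S̄* = -S̄` on the blocks. Exponentiating, `J` conjugates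
`exp(tÂ)*` into `exp(-tÂ)`, which gives both symplectic identities.

Hilbert–Schmidt operators form a two-sided ideal, with `‖YX‖₂ ≤ ‖Y‖ ‖X‖₂` and `‖XY‖₂ ≤ ‖X‖₂ ‖Y‖`
(the latter because `‖X*‖₂ = ‖X‖₂`). Since `(AB)₂₁ = A₂₁ B₁₁ + A₂₂ B₂₁`, this gives
`‖(Âⁿ)₂₁‖₂ ≤ ‖T‖₂ (2(‖Â‖ + 1))ⁿ`, so the lower-left blocks of the exponential series converge
absolutely in `ℓ²`-column norm and their sum `exp(tÂ)₂₁` is Hilbert–Schmidt.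
-/

open scoped InnerProductSpace ENNReal

section Conjugation

variable {E F : Type*} [NormedAddCommGroup E] [InnerProductSpace ℂ E]
  [NormedAddCommGroup F] [InnerProductSpace ℂ F]

theorem LinearIsometry.inner_map_map_of_starRingEnd (Γ : E →ₛₗᵢ[starRingEnd ℂ] F) (x y : E) :
    ⟪Γ x, Γ y⟫_ℂ = ⟪y, x⟫_ℂ := by
  have hre : ∀ x y, (⟪Γ x, Γ y⟫_ℂ).re = (⟪x, y⟫_ℂ).re := fun x y => by
    have hE (u v : E) :=
      re_inner_eq_norm_add_mul_self_sub_norm_mul_self_sub_norm_mul_self_div_two (𝕜 := ℂ) u v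
    have hF (u v : F) :=
      re_inner_eq_norm_add_mul_self_sub_norm_mul_self_sub_norm_mul_self_div_two (𝕜 := ℂ) u v
    simp only [RCLike.re_to_complex] at hE hF
    rw [hE, hF, ← map_add, Γ.norm_map, Γ.norm_map, Γ.norm_map]
  apply Complex.ext
  · rw [hre, ← inner_conj_symm, Complex.conj_re]
  · have h := hre x (Complex.I • y)
    rw [Γ.map_smulₛₗ, inner_smul_right, inner_smul_right] at h
    rw [← inner_conj_symm y x, Complex.conj_im]
    simpa using h

variable {Γ : E →ₛₗᵢ[starRingEnd ℂ] E}

theorem conjOp_apply (X : E →L[ℂ] E) (x : E) : conjOp Γ X x = Γ (X (Γ x)) := rfl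

theorem conjOp_neg (X : E →L[ℂ] E) : conjOp Γ (-X) = -conjOp Γ X := by
  ext x
  simp [conjOp_apply]

theorem conjOp_conjOp (hΓ : ∀ x, Γ (Γ x) = x) (X : E →L[ℂ] E) : conjOp Γ (conjOp Γ X) = X := by
  ext x
  simp [conjOp_apply, hΓ]

theorem adjoint_conjOp [CompleteSpace E] (hΓ : ∀ x, Γ (Γ x) = x) (X : E →L[ℂ] E) :
    (conjOp Γ X).adjoint = conjOp Γ X.adjoint := by
  refine ((ContinuousLinearMap.eq_adjoint_iff _ _).2 fun x y => ?_).symm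
  calc ⟪Γ (X.adjoint (Γ x)), y⟫_ℂ = ⟪Γ (X.adjoint (Γ x)), Γ (Γ y)⟫_ℂ := by rw [hΓ]
    _ = ⟪X (Γ y), Γ x⟫_ℂ := by
      rw [Γ.inner_map_map_of_starRingEnd, ContinuousLinearMap.adjoint_inner_right]
    _ = ⟪x, Γ (X (Γ y))⟫_ℂ := by rw [← Γ.inner_map_map_of_starRingEnd, hΓ]

end Conjugation

section Blocks

variable {E : Type*} [NormedAddCommGroup E] [InnerProductSpace ℂ E]

@[simp] theorem proj2_mk2 (φ ψ : E) : proj2 (mk2 φ ψ) = ψ := rfl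

theorem mk2_proj (x : H2 E) : mk2 (proj1 x) (proj2 x) = x := rfl

theorem inc1_apply (f : E) : inc1 f = mk2 f 0 := rfl

theorem inc2_apply (f : E) : inc2 f = mk2 0 f := rfl

@[simp] theorem mk2_add (φ ψ φ' ψ' : E) : mk2 φ ψ + mk2 φ' ψ' = mk2 (φ + φ') (ψ + ψ') := rfl

theorem mk2_zero : mk2 (0 : E) 0 = 0 := rfl

theorem inner_mk2 (φ ψ φ' ψ' : E) : ⟪mk2 φ ψ, mk2 φ' ψ'⟫_ℂ = ⟪φ, φ'⟫_ℂ + ⟪ψ, ψ'⟫_ℂ := rfl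

theorem ext_mk2 {B C : H2 E →L[ℂ] H2 E} (h : ∀ φ ψ, B (mk2 φ ψ) = C (mk2 φ ψ)) : B = C :=
  ContinuousLinearMap.ext fun x => h (proj1 x) (proj2 x)

theorem inc1_add_inc2 (x : H2 E) : inc1 (proj1 x) + inc2 (proj2 x) = x := by
  rw [inc1_apply, inc2_apply, mk2_add, add_zero, zero_add, mk2_proj]

theorem blk21_mul (B C : H2 E →L[ℂ] H2 E) :
    blk21 (B * C) = blk21 B ∘L blk11 C + blk22 B ∘L blk21 C := by
  ext f
  change proj2 (B (C (inc1 f))) = _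
  rw [← inc1_add_inc2 (C (inc1 f)), map_add, map_add]
  rfl

theorem blk21_one : blk21 (1 : H2 E →L[ℂ] H2 E) = 0 := rfl

theorem blk21_smul (c : ℂ) (B : H2 E →L[ℂ] H2 E) : blk21 (c • B) = c • blk21 B := by
  ext f
  simp [blk21]

theorem norm_blk11_le (B : H2 E →L[ℂ] H2 E) : ‖blk11 B‖ ≤ ‖B‖ := by
  refine ContinuousLinearMap.opNorm_le_bound _ (norm_nonneg B) fun f => ?_
  calc ‖proj1 (B (inc1 f))‖ ≤ ‖B (inc1 f)‖ := WithLp.norm_fst_le _ _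
    _ ≤ ‖B‖ * ‖f‖ := (B.le_opNorm _).trans_eq (by simp [inc1_apply, mk2])

theorem norm_blk22_le (B : H2 E →L[ℂ] H2 E) : ‖blk22 B‖ ≤ ‖B‖ := by
  refine ContinuousLinearMap.opNorm_le_bound _ (norm_nonneg B) fun f => ?_
  calc ‖proj2 (B (inc2 f))‖ ≤ ‖B (inc2 f)‖ := WithLp.norm_snd_le _ _
    _ ≤ ‖B‖ * ‖f‖ := (B.le_opNorm _).trans_eq (by simp [inc2_apply, mk2])

theorem HasSum.blk21 {u : ℕ → H2 E →L[ℂ] H2 E} {B : H2 E →L[ℂ] H2 E} (h : HasSum u B) :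
    HasSum (fun n => blk21 (u n)) (blk21 B) :=
  h.mapL ((ContinuousLinearMap.compL ℂ E (H2 E) E proj2).comp
    ((ContinuousLinearMap.compL ℂ E (H2 E) (H2 E)).flip inc1))

theorem adjoint_apply_mk2 [CompleteSpace E] {A : H2 E →L[ℂ] H2 E} {P Q R U : E →L[ℂ] E}
    (hA : ∀ φ ψ, A (mk2 φ ψ) = mk2 (P φ + Q ψ) (R φ + U ψ)) (φ ψ : E) :
    A.adjoint (mk2 φ ψ) = mk2 (P.adjoint φ + R.adjoint ψ) (Q.adjoint φ + U.adjoint ψ) := by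
  refine ext_inner_right ℂ fun y => ?_
  rw [← mk2_proj y, ContinuousLinearMap.adjoint_inner_left, hA, inner_mk2, inner_mk2]
  simp only [inner_add_left, inner_add_right, ContinuousLinearMap.adjoint_inner_left]
  ring

end Blocks

section Symplectic

variable {𝔸 : Type*} [NormedRing 𝔸] [NormedAlgebra ℚ 𝔸] [CompleteSpace 𝔸] [StarRing 𝔸]
  [ContinuousStar 𝔸] {A J : 𝔸}

open NormedSpace

theorem star_exp_mul_mul_exp (hA : star A * J + J * A = 0) : star (exp A) * J * exp A = J := by
  have h : SemiconjBy J A (-star A) := by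
    rw [SemiconjBy, neg_mul, eq_neg_iff_add_eq_zero, add_comm, hA]
  rw [star_exp, ← neg_neg (star A)]
  exact h.exp_neg_mul_mul_exp_eq_self

theorem exp_mul_mul_star_exp (hJ : J * J = 1) (hA : star A * J + J * A = 0) :
    exp A * J * star (exp A) = J := by
  have h : SemiconjBy J (star A) (-A) := by
    rw [SemiconjBy, neg_mul, eq_neg_iff_add_eq_zero]
    calc J * star A + A * J = J * star A * (J * J) + J * J * A * J := by
          rw [hJ, mul_one, one_mul]
      _ = J * (star A * J + J * A) * J := by noncomm_ring
      _ = 0 := by rw [hA, mul_zero, zero_mul]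
  rw [star_exp, ← neg_neg A]
  simpa only [neg_neg] using h.exp_neg_mul_mul_exp_eq_self

end Symplectic

section HilbertSchmidt

variable {E : Type*} [NormedAddCommGroup E] [InnerProductSpace ℂ E] {ι : Type*}
  {b : HilbertBasis ι ℂ E} {X Y : E →L[ℂ] E}

theorem HilbertBasis.hasSum_norm_sq (b : HilbertBasis ι ℂ E) (x : E) :
    HasSum (fun i => ‖⟪b i, x⟫_ℂ‖ ^ 2) (‖x‖ ^ 2) := by
  simpa [b.repr_apply_apply] using lp.hasSum_norm (p := 2) (by norm_num) (b.repr x)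

theorem HilbertBasis.enorm_sq_eq_tsum (b : HilbertBasis ι ℂ E) (x : E) :
    ‖x‖ₑ ^ 2 = ∑' i, ‖⟪b i, x⟫_ℂ‖ₑ ^ 2 := by
  have h : HasSum (fun i => ‖⟪b i, x⟫_ℂ‖₊ ^ 2) (‖x‖₊ ^ 2) := by
    rw [← NNReal.hasSum_coe]
    push_cast
    exact b.hasSum_norm_sq x
  simpa [enorm_eq_nnnorm] using (ENNReal.hasSum_coe.2 h).tsum_eq.symm

theorem tsum_enorm_sq_adjoint [CompleteSpace E] (X : E →L[ℂ] E) :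
    ∑' i, ‖X.adjoint (b i)‖ₑ ^ 2 = ∑' i, ‖X (b i)‖ₑ ^ 2 :=
  calc ∑' i, ‖X.adjoint (b i)‖ₑ ^ 2 = ∑' i, ∑' j, ‖⟪b i, X (b j)⟫_ℂ‖ₑ ^ 2 := by
        refine tsum_congr fun i => (b.enorm_sq_eq_tsum _).trans (tsum_congr fun j => ?_)
        rw [ContinuousLinearMap.adjoint_inner_right, ← ofReal_norm, norm_inner_symm,
          ofReal_norm]
    _ = ∑' j, ∑' i, ‖⟪b i, X (b j)⟫_ℂ‖ₑ ^ 2 := ENNReal.tsum_comm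
    _ = ∑' j, ‖X (b j)‖ₑ ^ 2 := tsum_congr fun j => (b.enorm_sq_eq_tsum _).symm

theorem isHS_iff_tsum_enorm_sq_ne_top : IsHS b X ↔ ∑' i, ‖X (b i)‖ₑ ^ 2 ≠ ∞ := by
  simp only [enorm_eq_nnnorm, ← ENNReal.coe_pow, ENNReal.tsum_coe_ne_top_iff_summable,
    ← NNReal.summable_coe, NNReal.coe_pow, coe_nnnorm, IsHS]

theorem hsNorm_eq_sqrt_toReal : hsNorm b X = √(∑' i, ‖X (b i)‖ₑ ^ 2).toReal := by
  rw [ENNReal.tsum_toReal_eq (fun _ => by finiteness)]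
  simp [hsNorm]

theorem isHS_adjoint_iff [CompleteSpace E] : IsHS b X.adjoint ↔ IsHS b X := by
  rw [isHS_iff_tsum_enorm_sq_ne_top, isHS_iff_tsum_enorm_sq_ne_top, tsum_enorm_sq_adjoint]

theorem hsNorm_adjoint [CompleteSpace E] (X : E →L[ℂ] E) : hsNorm b X.adjoint = hsNorm b X := by
  rw [hsNorm_eq_sqrt_toReal, hsNorm_eq_sqrt_toReal, tsum_enorm_sq_adjoint]

theorem tsum_enorm_sq_comp_le (Y X : E →L[ℂ] E) :
    ∑' i, ‖(Y ∘L X) (b i)‖ₑ ^ 2 ≤ ‖Y‖ₑ ^ 2 * ∑' i, ‖X (b i)‖ₑ ^ 2 := by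
  rw [← ENNReal.tsum_mul_left]
  refine ENNReal.tsum_le_tsum fun i => ?_
  rw [← mul_pow]
  gcongr
  exact Y.le_opENorm _

theorem IsHS.comp_left (h : IsHS b X) (Y : E →L[ℂ] E) : IsHS b (Y ∘L X) := by
  rw [isHS_iff_tsum_enorm_sq_ne_top] at h ⊢
  exact ne_top_of_le_ne_top (by finiteness) (tsum_enorm_sq_comp_le Y X)

theorem hsNorm_comp_left_le (h : IsHS b X) (Y : E →L[ℂ] E) :
    hsNorm b (Y ∘L X) ≤ ‖Y‖ * hsNorm b X := by
  rw [isHS_iff_tsum_enorm_sq_ne_top] at h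
  rw [hsNorm_eq_sqrt_toReal, hsNorm_eq_sqrt_toReal, ← Real.sqrt_sq (norm_nonneg Y),
    ← Real.sqrt_mul (sq_nonneg _), ← toReal_enorm, ← ENNReal.toReal_pow, ← ENNReal.toReal_mul]
  gcongr
  · finiteness
  · exact tsum_enorm_sq_comp_le Y X

theorem IsHS.comp_right [CompleteSpace E] (h : IsHS b X) (Y : E →L[ℂ] E) : IsHS b (X ∘L Y) := by
  rw [← isHS_adjoint_iff, ContinuousLinearMap.adjoint_comp]
  exact (isHS_adjoint_iff.2 h).comp_left _

theorem hsNorm_comp_right_le [CompleteSpace E] (h : IsHS b X) (Y : E →L[ℂ] E) :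
    hsNorm b (X ∘L Y) ≤ hsNorm b X * ‖Y‖ := by
  rw [← hsNorm_adjoint, ContinuousLinearMap.adjoint_comp, ← hsNorm_adjoint X, mul_comm,
    ← LinearIsometryEquiv.norm_map ContinuousLinearMap.adjoint Y]
  exact hsNorm_comp_left_le (isHS_adjoint_iff.2 h) _

theorem hsNorm_smul (c : ℂ) (X : E →L[ℂ] E) : hsNorm b (c • X) = ‖c‖ * hsNorm b X := by
  simp [hsNorm, norm_smul, mul_pow, tsum_mul_left, Real.sqrt_mul (sq_nonneg _)]

theorem IsHS.smul (h : IsHS b X) (c : ℂ) : IsHS b (c • X) := by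
  simpa [IsHS, norm_smul, mul_pow] using h.mul_left (‖c‖ ^ 2)

theorem isHS_iff_memℓp : IsHS b X ↔ Memℓp (fun i => X (b i)) 2 := by
  rw [memℓp_gen_iff (by norm_num)]
  simp [IsHS]

def IsHS.toLp (h : IsHS b X) : lp (fun _ : ι => E) 2 :=
  ⟨fun i => X (b i), isHS_iff_memℓp.1 h⟩

theorem IsHS.norm_toLp (h : IsHS b X) : ‖h.toLp‖ = hsNorm b X := by
  rw [lp.norm_eq_tsum_rpow (by norm_num), hsNorm, Real.sqrt_eq_rpow]
  simp [IsHS.toLp]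

theorem IsHS.add (hX : IsHS b X) (hY : IsHS b Y) : IsHS b (X + Y) :=
  isHS_iff_memℓp.2 ((isHS_iff_memℓp.1 hX).add (isHS_iff_memℓp.1 hY))

theorem hsNorm_add_le (hX : IsHS b X) (hY : IsHS b Y) :
    hsNorm b (X + Y) ≤ hsNorm b X + hsNorm b Y := by
  rw [← hX.norm_toLp, ← hY.norm_toLp, ← (hX.add hY).norm_toLp]
  exact norm_add_le hX.toLp hY.toLp

theorem isHS_of_hasSum [CompleteSpace E] {u : ℕ → E →L[ℂ] E} (hu : ∀ n, IsHS b (u n))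
    (hs : Summable fun n => hsNorm b (u n)) (hX : HasSum u X) : IsHS b X := by
  have hv : Summable fun n => (hu n).toLp :=
    Summable.of_norm (by simpa only [IsHS.norm_toLp] using hs)
  have hcol : (fun i => X (b i)) = ⇑(∑' n, (hu n).toLp) := funext fun i =>
    (hX.mapL (ContinuousLinearMap.apply ℂ E (b i))).unique
      (hv.hasSum.mapL (lp.evalCLM ℂ (fun _ : ι => E) 2 i))
  rw [isHS_iff_memℓp, hcol]
  exact lp.memℓp _

end HilbertSchmidt

theorem ContinuousLinearMap.norm_pow_le_add_one_pow {𝕜 F : Type*} [NontriviallyNormedField 𝕜]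
    [NormedAddCommGroup F] [NormedSpace 𝕜 F] (A : F →L[𝕜] F) (n : ℕ) :
    ‖A ^ n‖ ≤ (‖A‖ + 1) ^ n := by
  rcases n.eq_zero_or_pos with rfl | hn
  · rw [pow_zero, pow_zero]
    exact ContinuousLinearMap.norm_id_le
  · exact (norm_pow_le' A hn).trans (pow_le_pow_left₀ (norm_nonneg _) (by linarith) n)

section LowerLeftBlock

variable {E : Type*} [NormedAddCommGroup E] [InnerProductSpace ℂ E] [CompleteSpace E]
  {ι : Type*} {b : HilbertBasis ι ℂ E} {A : H2 E →L[ℂ] H2 E}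

theorem IsHS.blk21_pow (hA : IsHS b (blk21 A)) (n : ℕ) :
    IsHS b (blk21 (A ^ n)) ∧
      hsNorm b (blk21 (A ^ n)) ≤ hsNorm b (blk21 A) * (2 * (‖A‖ + 1)) ^ n := by
  set Q := ‖A‖ + 1
  have hQ : 1 ≤ Q := by simp [Q]
  have hm : 0 ≤ hsNorm b (blk21 A) := Real.sqrt_nonneg _
  induction n with
  | zero => simp [blk21_one, IsHS, hsNorm]
  | succ n ih =>
    rw [pow_succ', blk21_mul]
    have h1 := hA.comp_right (blk11 (A ^ n))
    have h2 := ih.1.comp_left (blk22 A)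
    refine ⟨h1.add h2, (hsNorm_add_le h1 h2).trans ?_⟩
    calc hsNorm b (blk21 A ∘L blk11 (A ^ n)) + hsNorm b (blk22 A ∘L blk21 (A ^ n))
        ≤ hsNorm b (blk21 A) * Q ^ n + Q * (hsNorm b (blk21 A) * (2 * Q) ^ n) := by
          gcongr
          · exact (hsNorm_comp_right_le hA _).trans (by
              gcongr; exact (norm_blk11_le _).trans (A.norm_pow_le_add_one_pow n))
          · exact (hsNorm_comp_left_le ih.1 _).trans (mul_le_mul
              ((norm_blk22_le A).trans (le_add_of_nonneg_right zero_le_one)) ih.2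
              (Real.sqrt_nonneg _) (by linarith))
      _ ≤ hsNorm b (blk21 A) * (2 * Q) ^ (n + 1) := by
          have : Q ^ n ≤ Q * (2 * Q) ^ n := by
            calc Q ^ n ≤ (2 * Q) ^ n := by gcongr; linarith
              _ ≤ Q * (2 * Q) ^ n := le_mul_of_one_le_left (by positivity) hQ
          rw [pow_succ]
          nlinarith

theorem IsHS.blk21_exp (hA : IsHS b (blk21 A)) : IsHS b (blk21 (NormedSpace.exp A)) := by
  set m := hsNorm b (blk21 A)
  set Q := 2 * (‖A‖ + 1)
  have hu (n : ℕ) : IsHS b (blk21 ((n.factorial⁻¹ : ℂ) • A ^ n)) := by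
    rw [blk21_smul]
    exact (hA.blk21_pow n).1.smul _
  have hbound (n : ℕ) :
      hsNorm b (blk21 ((n.factorial⁻¹ : ℂ) • A ^ n)) ≤ m * (Q ^ n / n.factorial) := by
    rw [blk21_smul, hsNorm_smul, norm_inv, Complex.norm_natCast, mul_div_assoc', inv_mul_eq_div]
    gcongr
    exact (hA.blk21_pow n).2
  refine isHS_of_hasSum hu ?_ (NormedSpace.exp_series_hasSum_exp' (𝕂 := ℂ) A).blk21
  exact .of_nonneg_of_le (fun _ => Real.sqrt_nonneg _) hbound
    ((Real.summable_pow_div_factorial Q).mul_left m)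

end LowerLeftBlock

section Bogoliubov

variable {E : Type*} [NormedAddCommGroup E] [InnerProductSpace ℂ E] [CompleteSpace E]

theorem star_mul_add_mul_eq_zero_of_apply_mk2 {Γ : E →ₛₗᵢ[starRingEnd ℂ] E}
    (hΓ : ∀ x, Γ (Γ x) = x) {S T : E →L[ℂ] E} (hS : S.adjoint = -S)
    (hT : conjOp Γ T.adjoint = T) {A J : H2 E →L[ℂ] H2 E}
    (hA : ∀ φ ψ, A (mk2 φ ψ) = mk2 (S φ + conjOp Γ T ψ) (T φ + conjOp Γ S ψ))
    (hJ : ∀ φ ψ, J (mk2 φ ψ) = mk2 φ (-ψ)) : star A * J + J * A = 0 := by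
  have hT' : T.adjoint = conjOp Γ T := by rw [← conjOp_conjOp hΓ T.adjoint, hT]
  have hTbar : (conjOp Γ T).adjoint = T := by rw [adjoint_conjOp hΓ, hT]
  have hSbar : (conjOp Γ S).adjoint = -conjOp Γ S := by rw [adjoint_conjOp hΓ, hS, conjOp_neg]
  refine ext_mk2 fun φ ψ => ?_
  change A.adjoint (J (mk2 φ ψ)) + J (A (mk2 φ ψ)) = 0
  rw [hJ, adjoint_apply_mk2 hA, hA, hJ, hS, hT', hTbar, hSbar, mk2_add, ← mk2_zero]
  congr 1 <;> simp only [neg_apply, map_neg] <;> abel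

end Bogoliubov

/-- for `Â` with `S* = -S`, `T̄* = T`, `T` Hilbert–Schmidt, the operator `exp(tÂ)`
is symplectic and its lower-left block is Hilbert–Schmidt, i.e. `exp(tÂ) ∈ Sp₂` for all `t`. -/
theorem stmt6 {ι : Type*}
    (Γ : H →ₛₗᵢ[starRingEnd ℂ] H) (hΓ : ∀ x, Γ (Γ x) = x)
    (S T : H →L[ℂ] H) (hS : adjoint S = -S) (hT : conjOp Γ (adjoint T) = T)
    (b : HilbertBasis ι ℂ H) (hTHS : IsHS b T)
    (Ahat J : H2 H →L[ℂ] H2 H)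
    (hA : ∀ φ ψ : H,
      Ahat (mk2 φ ψ) = mk2 (S φ + conjOp Γ T ψ) (T φ + conjOp Γ S ψ))
    (hJ : ∀ φ ψ : H, J (mk2 φ ψ) = mk2 φ (-ψ)) :
    ∀ t : ℝ,
      NormedSpace.exp (t • Ahat) ∘L J ∘L adjoint (NormedSpace.exp (t • Ahat)) = J ∧
      adjoint (NormedSpace.exp (t • Ahat)) ∘L J ∘L NormedSpace.exp (t • Ahat) = J ∧
      IsHS b (blk21 (NormedSpace.exp (t • Ahat))) := by
  intro t
  have hskew := star_mul_add_mul_eq_zero_of_apply_mk2 hΓ hS hT hA hJ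
  have hJJ : J * J = 1 := ext_mk2 fun φ ψ => by
    change J (J (mk2 φ ψ)) = mk2 φ ψ
    rw [hJ, hJ, neg_neg]
  have hblk : blk21 Ahat = T := by
    ext f
    simp [blk21, inc1_apply, hA]
  rw [← Complex.coe_smul t Ahat]
  have htskew : star ((t : ℂ) • Ahat) * J + J * ((t : ℂ) • Ahat) = 0 := by
    rw [star_smul, Complex.star_def, Complex.conj_ofReal, smul_mul_assoc, mul_smul_comm,
      ← smul_add (t : ℂ) (star Ahat * J) (J * Ahat), hskew, smul_zero]
  have hHS : IsHS b (blk21 ((t : ℂ) • Ahat)) := by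
    rw [blk21_smul, hblk]
    exact hTHS.smul _
  let : NormedAlgebra ℚ (H2 H →L[ℂ] H2 H) := .restrictScalars ℚ ℂ _
  refine ⟨?_, ?_, hHS.blk21_exp⟩
  · have h := exp_mul_mul_star_exp hJJ htskew
    rwa [mul_assoc, ContinuousLinearMap.star_eq_adjoint] at h
  · have h := star_exp_mul_mul_exp (𝔸 := H2 H →L[ℂ] H2 H) htskew
    rwa [mul_assoc, ContinuousLinearMap.star_eq_adjoint] at h
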